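/- Let G be a maximal outerplanar graph and let G' be its clique graph (vertices are the triangles of G, two triangles adjacent iff they share a vertex). If X' is a dominating set of G' and X = ⋃_{abc ∈ X'} {a, b, c} is the union of the vertex sets of the triangles in X', then X is a dominating set of G; hence γ(G) ≤ 3 γ(G'). -/

import Mathlib

open SimpleGraph Finset

/-- `X` is a dominating set of `G`: every vertex is in `X` or adjacent to a vertex of `X`. -/
def IsDominatingSet {V : Type*} (G : SimpleGraph V) (X : Finset V) : Prop :=
  ∀ v : V, v ∈ X ∨ ∃ u ∈ X, G.Adj u v

/-- The domination number of `G`. -/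
noncomputable def domNum {V : Type*} (G : SimpleGraph V) : ℕ :=
  sInf {n : ℕ | ∃ X : Finset V, IsDominatingSet G X ∧ X.card = n}

/-- `Y` is a packing of `G`: closed neighborhoods of distinct vertices of `Y` are disjoint
(equivalently, distinct vertices of `Y` are at distance at least 3). -/
def IsPackingSet {V : Type*} (G : SimpleGraph V) (Y : Finset V) : Prop :=
  ∀ u ∈ Y, ∀ v ∈ Y, u ≠ v →
    Disjoint (insert u (G.neighborSet u)) (insert v (G.neighborSet v))

/-- The packing number of `G`. -/
noncomputable def packNum {V : Type*} (G : SimpleGraph V) : ℕ :=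
  sSup {n : ℕ | ∃ Y : Finset V, IsPackingSet G Y ∧ Y.card = n}

/-- `G` is a maximal outerplanar graph: its vertices can be arranged in a Hamiltonian
cycle (the boundary of the polygon), all chords are pairwise non-crossing, and the number
of edges is `2n - 3` (a full triangulation of the polygon). -/
def IsMaximalOuterplanar {V : Type*} [Fintype V] (G : SimpleGraph V) : Prop :=
  ∃ f : Fin (Fintype.card V) ≃ V,
    (∀ i : Fin (Fintype.card V), G.Adj (f i) (f (finRotate (Fintype.card V) i))) ∧
    (∀ i j k l : Fin (Fintype.card V), G.Adj (f i) (f j) → G.Adj (f k) (f l) →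
      ¬ (i < k ∧ k < j ∧ j < l)) ∧
    G.edgeSet.ncard = 2 * Fintype.card V - 3

/-- The clique graph of `G`: vertices are the triangles of `G`, two triangles being
adjacent iff they are distinct and share a vertex. -/
def cliqueGraph {V : Type*} [DecidableEq V] (G : SimpleGraph V) :
    SimpleGraph {t : Finset V // G.IsNClique 3 t} :=
  SimpleGraph.fromRel (fun s t => (s.1 ∩ t.1).Nonempty)

/-!
Number the vertices `0, …, m` along the boundary cycle, so that the edges form a noncrossing
family containing every boundary edge `x (x + 1)`. Splitting the sub-polygon `a, …, b` along the
chord from `a` to its farthest neighbour `t < b` shows by induction that it spans at most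
`2 (b - a) - 1` edges, and at most `2 (b - a) - 2` unless `ab` is an edge and every chord `ij`
with `j ≥ i + 2` has an apex `k` with `ik` and `kj` edges. A maximal outerplanar graph has
`2m - 1` edges, hence is triangulated in this sense, and every vertex lies in a triangle.
A vertex `v` then lies in a triangle that is in `X'` or meets a triangle of `X'` in a vertex
`u`, which is `v` or a neighbour of `v`.
-/

namespace SimpleGraph

section Polygon

variable (H : SimpleGraph ℕ)

def IsNoncrossing : Prop :=
  ∀ ⦃i j k l⦄, H.Adj i j → H.Adj k l → i < k → k < j → j < l → False

def arcs [DecidableRel H.Adj] (a b : ℕ) : Finset (ℕ × ℕ) :=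
  (Icc a b ×ˢ Icc a b).filter fun p => p.1 < p.2 ∧ H.Adj p.1 p.2

def HasApex (i j : ℕ) : Prop :=
  ∃ k, i < k ∧ k < j ∧ H.Adj i k ∧ H.Adj k j

def IsTriangulated (a b : ℕ) : Prop :=
  H.Adj a b ∧ ∀ i j, a ≤ i → i + 2 ≤ j → j ≤ b → H.Adj i j → H.HasApex i j

variable {H} {a b t : ℕ}

theorem exists_farthest_neighbor (hadj : H.Adj a (a + 1)) (hab : a + 1 < b) :
    ∃ t, a < t ∧ t < b ∧ H.Adj a t ∧ ∀ x, t < x → x < b → ¬ H.Adj a x := by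
  classical
  refine ⟨Nat.findGreatest (H.Adj a) (b - 1), ?_, ?_, ?_, fun x htx hxb => ?_⟩
  · exact Nat.le_findGreatest (by omega) hadj
  · have := Nat.findGreatest_le (P := H.Adj a) (b - 1)
    omega
  · exact Nat.findGreatest_spec (by omega) hadj
  · exact Nat.findGreatest_is_greatest htx (by omega)

theorem IsTriangulated.of_adj {i j : ℕ} (h : H.IsTriangulated a b) (hai : a ≤ i) (hjb : j ≤ b)
    (hij : H.Adj i j) : H.IsTriangulated i j :=
  ⟨hij, fun _ _ hi hij' hj => h.2 _ _ (by omega) hij' (by omega)⟩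

theorem isTriangulated_of_split (hnc : H.IsNoncrossing) (hadj : H.Adj a t)
    (hmax : ∀ x, t < x → x < b → ¬ H.Adj a x) (hab : H.Adj a b)
    (hleft : H.IsTriangulated a t) (hright : H.IsTriangulated t b) :
    H.IsTriangulated a b := by
  refine ⟨hab, fun i j hai hij hjb hadj' => ?_⟩
  by_cases hjt : j ≤ t
  · exact hleft.2 i j hai hij hjt hadj'
  by_cases hti : t ≤ i
  · exact hright.2 i j hti hij hjb hadj'
  have hia : i = a := by
    by_contra hia
    exact hnc hadj hadj' (by omega) (by omega) (by omega)
  subst hia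
  obtain rfl : j = b := by_contra fun hjb' => hmax j (by omega) (by omega) hadj'
  exact ⟨t, by omega, by omega, hadj, hright.1⟩

theorem IsTriangulated.exists_isNClique_three_mem {m : ℕ} (h : H.IsTriangulated a b)
    (hab : a + 2 ≤ b) (ham : a ≤ m) (hmb : m ≤ b) : ∃ s, H.IsNClique 3 s ∧ m ∈ s := by
  induction hd : b - a using Nat.strong_induction_on generalizing a b with
  | _ d ih =>
  obtain ⟨k, hak, hkb, hadj_ak, hadj_kb⟩ := h.2 a b le_rfl hab le_rfl h.1
  have htri : H.IsNClique 3 {a, k, b} := is3Clique_triple_iff.2 ⟨hadj_ak, h.1, hadj_kb⟩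
  by_cases hmk : m ≤ k
  · by_cases hak' : a + 2 ≤ k
    · exact ih (k - a) (by omega) (h.of_adj le_rfl hkb.le hadj_ak) hak' ham hmk rfl
    · obtain rfl | rfl : m = a ∨ m = k := by omega
      all_goals exact ⟨_, htri, by simp⟩
  · by_cases hkb' : k + 2 ≤ b
    · exact ih (b - k) (by omega) (h.of_adj hak.le le_rfl hadj_kb) hkb' (by omega) hmb rfl
    · obtain rfl : m = b := by omega
      exact ⟨_, htri, by simp⟩

variable [DecidableRel H.Adj]

theorem mem_arcs {p : ℕ × ℕ} :
    p ∈ H.arcs a b ↔ a ≤ p.1 ∧ p.1 < p.2 ∧ p.2 ≤ b ∧ H.Adj p.1 p.2 := by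
  simp only [arcs, mem_filter, mem_product, mem_Icc]
  constructor
  · rintro ⟨⟨⟨h1, -⟩, -, h2⟩, hlt, hadj⟩
    exact ⟨h1, hlt, h2, hadj⟩
  · rintro ⟨h1, hlt, h2, hadj⟩
    exact ⟨⟨⟨h1, by omega⟩, by omega, h2⟩, hlt, hadj⟩

theorem card_arcs_succ_le_one (a : ℕ) : #(H.arcs a (a + 1)) ≤ 1 := by
  refine card_le_one.2 fun p hp q hq => ?_
  rw [mem_arcs] at hp hq
  exact Prod.ext (by omega) (by omega)

theorem card_arcs_eq_ncard_edgeSet (hsupp : ∀ x y, H.Adj x y → a ≤ x ∧ x ≤ b) :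
    #(H.arcs a b) = H.edgeSet.ncard := by
  have hedges : H.edgeSet = ↑((H.arcs a b).image fun p => s(p.1, p.2)) := by
    ext e
    induction e using Sym2.ind with
    | _ x y =>
      simp only [mem_edgeSet, coe_image, Set.mem_image, mem_coe, Prod.exists, mem_arcs,
        Sym2.eq_iff]
      constructor
      · intro hxy
        obtain ⟨hx, hxb⟩ := hsupp x y hxy
        obtain ⟨hy, hyb⟩ := hsupp y x hxy.symm
        rcases hxy.ne.lt_or_gt with hlt | hlt
        · exact ⟨x, y, ⟨hx, hlt, hyb, hxy⟩, Or.inl ⟨rfl, rfl⟩⟩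
        · exact ⟨y, x, ⟨hy, hlt, hxb, hxy.symm⟩, Or.inr ⟨rfl, rfl⟩⟩
      · rintro ⟨x', y', ⟨-, -, -, hadj⟩, ⟨rfl, rfl⟩ | ⟨rfl, rfl⟩⟩
        exacts [hadj, hadj.symm]
  rw [hedges, Set.ncard_coe_finset, card_image_of_injOn]
  rintro ⟨x, y⟩ hp ⟨x', y'⟩ hq hpq
  simp only [mem_coe, mem_arcs] at hp hq
  rcases Sym2.eq_iff.1 hpq with ⟨rfl, rfl⟩ | ⟨rfl, rfl⟩
  · rfl
  · omega

theorem arcs_subset_insert_union (hnc : H.IsNoncrossing)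
    (hadj : H.Adj a t) (hmax : ∀ x, t < x → x < b → ¬ H.Adj a x) :
    H.arcs a b ⊆ insert (a, b) (H.arcs a t ∪ H.arcs t b) := by
  rintro ⟨i, j⟩ hij
  simp only [mem_insert, mem_union, mem_arcs, Prod.mk.injEq] at hij ⊢
  obtain ⟨hai, hlt, hjb, hij⟩ := hij
  by_cases hjt : j ≤ t
  · exact Or.inr (Or.inl ⟨hai, hlt, hjt, hij⟩)
  by_cases hti : t ≤ i
  · exact Or.inr (Or.inr ⟨hti, hlt, hjb, hij⟩)
  have hia : i = a := by
    by_contra hia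
    exact hnc hadj hij (by omega) (by omega) (by omega)
  subst hia
  exact Or.inl ⟨rfl, by_contra fun hjb' => hmax j (by omega) (by omega) hij⟩

theorem card_arcs_le_of_split (hnc : H.IsNoncrossing) (hadj : H.Adj a t)
    (hmax : ∀ x, t < x → x < b → ¬ H.Adj a x) :
    #(H.arcs a b) ≤ #(H.arcs a t) + #(H.arcs t b) + 1 := by
  grw [arcs_subset_insert_union hnc hadj hmax, card_insert_le, card_union_le]

theorem card_arcs_lt (hnc : H.IsNoncrossing)
    (hpath : ∀ x, a ≤ x → x < b → H.Adj x (x + 1)) (hab : a < b) :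
    #(H.arcs a b) < 2 * (b - a) := by
  induction hd : b - a using Nat.strong_induction_on generalizing a b with
  | _ d ih =>
  rcases (show b = a + 1 ∨ a + 1 < b by omega) with rfl | hab'
  · have := H.card_arcs_succ_le_one a
    omega
  obtain ⟨t, hat, htb, hadj, hmax⟩ := exists_farthest_neighbor (hpath a le_rfl hab) hab'
  have hleft := ih (t - a) (by omega) (fun x hx hxt => hpath x hx (by omega)) hat rfl
  have hright := ih (b - t) (by omega) (fun x hx hxb => hpath x (by omega) hxb) htb rfl
  have := card_arcs_le_of_split hnc hadj hmax
  omega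

theorem card_arcs_add_two_le (hnc : H.IsNoncrossing)
    (hpath : ∀ x, a ≤ x → x < b → H.Adj x (x + 1)) (hab : a < b)
    (hT : ¬ H.IsTriangulated a b) : #(H.arcs a b) + 2 ≤ 2 * (b - a) := by
  induction hd : b - a using Nat.strong_induction_on generalizing a b with
  | _ d ih =>
  rcases (show b = a + 1 ∨ a + 1 < b by omega) with rfl | hab'
  · exact absurd ⟨hpath a le_rfl hab, fun i j _ _ _ _ => by omega⟩ hT
  obtain ⟨t, hat, htb, hadj, hmax⟩ := exists_farthest_neighbor (hpath a le_rfl hab) hab'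
  have hpath_left : ∀ x, a ≤ x → x < t → H.Adj x (x + 1) :=
    fun x hx hxt => hpath x hx (by omega)
  have hpath_right : ∀ x, t ≤ x → x < b → H.Adj x (x + 1) :=
    fun x hx hxb => hpath x (by omega) hxb
  have hsplit := card_arcs_le_of_split hnc hadj hmax
  have hleft := card_arcs_lt hnc hpath_left hat
  have hright := card_arcs_lt hnc hpath_right htb
  have hdefect : ¬ H.Adj a b ∨ ¬ H.IsTriangulated a t ∨ ¬ H.IsTriangulated t b := by
    by_contra! h
    exact hT (isTriangulated_of_split hnc hadj hmax h.1 h.2.1 h.2.2)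
  rcases hdefect with hab_not | hleft_not | hright_not
  · have hnotMem : (a, b) ∉ H.arcs a b := fun h => hab_not (mem_arcs.1 h).2.2.2
    have := card_le_card
      ((subset_insert_iff_of_notMem hnotMem).1 (arcs_subset_insert_union hnc hadj hmax))
    grw [card_union_le] at this
    omega
  · have := ih (t - a) (by omega) hpath_left hat hleft_not rfl
    omega
  · have := ih (b - t) (by omega) hpath_right htb hright_not rfl
    omega

theorem isTriangulated_of_card_arcs (hnc : H.IsNoncrossing)
    (hpath : ∀ x, a ≤ x → x < b → H.Adj x (x + 1)) (hab : a < b)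
    (hcard : 2 * (b - a) ≤ #(H.arcs a b) + 1) : H.IsTriangulated a b := by
  by_contra hT
  have := card_arcs_add_two_le hnc hpath hab hT
  omega

end Polygon

end SimpleGraph

theorem IsMaximalOuterplanar.exists_isNClique_three_mem {V : Type*} [Fintype V]
    {G : SimpleGraph V} (hG : IsMaximalOuterplanar G) (hn : 3 ≤ Fintype.card V) (v : V) :
    ∃ s, G.IsNClique 3 s ∧ v ∈ s := by
  classical
  obtain ⟨f, hcyc, hcross, hcount⟩ := hG
  generalize Fintype.card V = n at f hcyc hcross hcount hn
  obtain ⟨m, rfl⟩ : ∃ m, n = m + 1 := ⟨n - 1, by omega⟩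
  let e : V ↪ ℕ := f.symm.toEmbedding.trans Fin.valEmbedding
  have he : ∀ i, e (f i) = i := by simp [e]
  have hmap_adj : ∀ x y, (G.map e).Adj x y →
      ∃ (hx : x < m + 1) (hy : y < m + 1), G.Adj (f ⟨x, hx⟩) (f ⟨y, hy⟩) := by
    rintro x y ⟨-, u, w, huw, rfl, rfl⟩
    exact ⟨(f.symm u).isLt, (f.symm w).isLt, by simpa [e] using huw⟩
  have hnc : (G.map e).IsNoncrossing := by
    intro i j k l hij hkl hik hkj hjl
    obtain ⟨hi, hj, hij⟩ := hmap_adj i j hij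
    obtain ⟨hk, hl, hkl⟩ := hmap_adj k l hkl
    exact hcross ⟨i, hi⟩ ⟨j, hj⟩ ⟨k, hk⟩ ⟨l, hl⟩ hij hkl ⟨hik, hkj, hjl⟩
  have hpath : ∀ x, 0 ≤ x → x < m → (G.map e).Adj x (x + 1) := fun x _ hx => by
    have := (map_adj_apply (G := G) (f := e)).2 (hcyc ⟨x, by omega⟩)
    rwa [finRotate_of_lt hx, he, he] at this
  have hsupp : ∀ x y, (G.map e).Adj x y → 0 ≤ x ∧ x ≤ m := fun x y hxy =>
    ⟨x.zero_le, Nat.le_of_lt_succ (hmap_adj x y hxy).1⟩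
  have hcard : 2 * (m - 0) ≤ #((G.map e).arcs 0 m) + 1 := by
    rw [card_arcs_eq_ncard_edgeSet hsupp, edgeSet_map,
      Set.ncard_image_of_injective _ e.sym2Map.injective, hcount]
    omega
  obtain ⟨s, hs, hvs⟩ := (isTriangulated_of_card_arcs hnc hpath (by omega) hcard)
    |>.exists_isNClique_three_mem (by omega) (e v).zero_le (Nat.le_of_lt_succ (f.symm v).isLt)
  obtain ⟨s', hs', rfl⟩ := (isNClique_map_iff (by norm_num)).1 hs
  exact ⟨s', hs', by simpa using hvs⟩

section Domination

variable {V : Type*}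

theorem domNum_le_card {G : SimpleGraph V} {X : Finset V} (hX : IsDominatingSet G X) :
    domNum G ≤ #X :=
  Nat.sInf_le ⟨X, hX, rfl⟩

theorem exists_isDominatingSet_card_eq_domNum [Finite V] (G : SimpleGraph V) :
    ∃ X, IsDominatingSet G X ∧ #X = domNum G := by
  have := Fintype.ofFinite V
  exact Nat.sInf_mem (s := {n | ∃ X : Finset V, IsDominatingSet G X ∧ #X = n})
    ⟨_, univ, fun v => Or.inl (mem_univ v), rfl⟩

variable [DecidableEq V] {G : SimpleGraph V}

theorem IsDominatingSet.biUnion_of_cliqueGraph (htri : ∀ v, ∃ s, G.IsNClique 3 s ∧ v ∈ s)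
    {X' : Finset {t : Finset V // G.IsNClique 3 t}} (hX' : IsDominatingSet (cliqueGraph G) X') :
    IsDominatingSet G (X'.biUnion fun t => t.1) := by
  intro v
  obtain ⟨t, ht, hvt⟩ := htri v
  rcases hX' ⟨t, ht⟩ with htX | ⟨s, hsX, hst⟩
  · exact Or.inl (mem_biUnion.2 ⟨_, htX, hvt⟩)
  obtain ⟨u, hu⟩ : (s.1 ∩ t).Nonempty := by
    obtain ⟨-, h | h⟩ := (fromRel_adj _ _ _).1 hst
    exacts [h, inter_comm t s.1 ▸ h]
  obtain ⟨hus, hut⟩ := mem_inter.1 hu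
  rcases eq_or_ne u v with rfl | huv
  · exact Or.inl (mem_biUnion.2 ⟨s, hsX, hus⟩)
  · exact Or.inr ⟨u, mem_biUnion.2 ⟨s, hsX, hus⟩, ht.1 hut hvt huv⟩

theorem domNum_le_three_mul_domNum_cliqueGraph [Fintype V]
    (htri : ∀ v, ∃ s, G.IsNClique 3 s ∧ v ∈ s) :
    domNum G ≤ 3 * domNum (cliqueGraph G) := by
  obtain ⟨X', hX', hcard⟩ := exists_isDominatingSet_card_eq_domNum (cliqueGraph G)
  calc domNum G ≤ #(X'.biUnion fun t => t.1) :=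
        domNum_le_card (hX'.biUnion_of_cliqueGraph htri)
    _ ≤ ∑ t ∈ X', #t.1 := card_biUnion_le
    _ = ∑ _t ∈ X', 3 := sum_congr rfl fun t _ => t.2.2
    _ = 3 * domNum (cliqueGraph G) := by rw [sum_const, smul_eq_mul, hcard, mul_comm]

end Domination

theorem mop_cliqueGraph_domination {V : Type*} [Fintype V] [DecidableEq V]
    (G : SimpleGraph V) (hmop : IsMaximalOuterplanar G) (hn : 3 ≤ Fintype.card V) :
    (∀ X' : Finset {t : Finset V // G.IsNClique 3 t},
        IsDominatingSet (cliqueGraph G) X' →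
        IsDominatingSet G (X'.biUnion (fun t => t.1))) ∧
      domNum G ≤ 3 * domNum (cliqueGraph G) := by
  have htri := hmop.exists_isNClique_three_mem hn
  exact ⟨fun _ hX' => hX'.biUnion_of_cliqueGraph htri,
    domNum_le_three_mul_domNum_cliqueGraph htri⟩
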